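/- Let Φ, Ψ be clause sets, θ₁ = θ₁' ∨ p and θ₂ = θ₂' ∨ ¬p be clauses with resolvent θ = θ₁' ∨ θ₂', and suppose p ∈ sig(Φ) \ sig(Ψ). If χ₁ is an intermediate separator of Φ and Ψ relative to θ₁ and χ₂ is an intermediate separator relative to θ₂, then χ₁ ∨ χ₂ is an intermediate separator of Φ and Ψ relative to θ. -/

import Mathlib

inductive PropForm : Type where
  | var : ℕ → PropForm
  | tru : PropForm
  | fls : PropForm
  | neg : PropForm → PropForm
  | conj : PropForm → PropForm → PropForm
  | disj : PropForm → PropForm → PropForm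
deriving DecidableEq

namespace PropForm

def eval (v : ℕ → Bool) : PropForm → Bool
  | var p => v p
  | tru => true
  | fls => false
  | neg φ => !(eval v φ)
  | conj φ ψ => eval v φ && eval v ψ
  | disj φ ψ => eval v φ || eval v ψ

def sig : PropForm → Finset ℕ
  | var p => {p}
  | tru => ∅
  | fls => ∅
  | neg φ => sig φ
  | conj φ ψ => sig φ ∪ sig ψ
  | disj φ ψ => sig φ ∪ sig ψ

def impl (φ ψ : PropForm) : PropForm := disj (neg φ) ψ

def iff (φ ψ : PropForm) : PropForm := conj (impl φ ψ) (impl ψ φ)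

end PropForm

/-- Semantic entailment: every model of `φ` is a model of `ψ`. -/
def Entails (φ ψ : PropForm) : Prop :=
  ∀ v : ℕ → Bool, φ.eval v = true → ψ.eval v = true

/-- `χ` is an intermediate separator of `Φ` and `Ψ` relative to the clause `θ`. -/
def IsIntermediateSep (Φ Ψ θ χ : PropForm) : Prop :=
  χ.sig ⊆ Φ.sig ∩ Ψ.sig ∧ Entails Φ (θ.disj χ) ∧ Entails Ψ (θ.disj χ.neg)

/-!
On the side of `Φ` this is plain resolution on `p`. On the side of `Ψ`, the atom `p` occurs
neither in `Ψ` nor in `θᵢ'` nor in `χᵢ` (which lives in the common signature), so every model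
of `Ψ` can be re-valued at `p` to falsify the literal on `p`; hence `Ψ ⊨ θᵢ' ∨ ¬χᵢ` for both `i`.
-/

namespace PropForm

theorem eval_update_of_notMem_sig {φ : PropForm} {p : ℕ} (hp : p ∉ φ.sig) (v : ℕ → Bool)
    (b : Bool) : φ.eval (Function.update v p b) = φ.eval v := by
  induction φ with
  | var q =>
    have hqp : q ≠ p := fun h => hp (by simp [sig, h])
    simp [eval, Function.update_of_ne hqp]
  | tru | fls => rfl
  | neg φ ih => simp only [eval, ih hp]
  | conj φ ψ ih₁ ih₂ | disj φ ψ ih₁ ih₂ =>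
    simp only [sig, Finset.mem_union, not_or] at hp
    simp only [eval, ih₁ hp.1, ih₂ hp.2]

end PropForm

open PropForm

namespace Entails

variable {Ψ α β γ δ : PropForm} {p : ℕ}

theorem of_forall_eval_eq (hΨ : p ∉ Ψ.sig) (hα : p ∉ α.sig) (b : Bool)
    (h : ∀ v, Ψ.eval v = true → v p = b → α.eval v = true) : Entails Ψ α := by
  intro v hv
  rw [← eval_update_of_notMem_sig hα v b]
  exact h _ (by rwa [eval_update_of_notMem_sig hΨ]) (Function.update_self ..)

theorem forget_var (h : Entails Ψ ((α.disj (var p)).disj β)) (hΨ : p ∉ Ψ.sig)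
    (hα : p ∉ α.sig) (hβ : p ∉ β.sig) : Entails Ψ (α.disj β) :=
  of_forall_eval_eq hΨ (by simp [sig, hα, hβ]) false fun v hv hvp => by
    simpa [eval, hvp] using h v hv

theorem forget_neg_var (h : Entails Ψ ((α.disj (var p).neg).disj β)) (hΨ : p ∉ Ψ.sig)
    (hα : p ∉ α.sig) (hβ : p ∉ β.sig) : Entails Ψ (α.disj β) :=
  of_forall_eval_eq hΨ (by simp [sig, hα, hβ]) true fun v hv hvp => by
    simpa [eval, hvp] using h v hv

theorem resolve (h₁ : Entails Ψ ((α.disj (var p)).disj γ))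
    (h₂ : Entails Ψ ((β.disj (var p).neg).disj δ)) :
    Entails Ψ ((α.disj β).disj (γ.disj δ)) := by
  intro v hv
  have e₁ := h₁ v hv
  have e₂ := h₂ v hv
  simp only [eval, Bool.or_eq_true, Bool.not_eq_true'] at e₁ e₂ ⊢
  cases hvp : v p <;>
    simp only [hvp, Bool.false_eq_true, Bool.true_eq_false, or_false] at e₁ e₂ <;> tauto

theorem disj_disj_neg_disj (h₁ : Entails Ψ (α.disj γ.neg)) (h₂ : Entails Ψ (β.disj δ.neg)) :
    Entails Ψ ((α.disj β).disj (γ.disj δ).neg) := by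
  intro v hv
  have e₁ := h₁ v hv
  have e₂ := h₂ v hv
  simp only [eval, Bool.or_eq_true, Bool.not_eq_true', Bool.or_eq_false_iff] at e₁ e₂ ⊢
  tauto

end Entails

theorem intermediate_sep_resolution_left_general (Φ Ψ θ₁' θ₂' χ₁ χ₂ : PropForm) (p : ℕ)
    (hp₁ : p ∉ θ₁'.sig) (hp₂ : p ∉ θ₂'.sig)
    (hpΨ : p ∉ Ψ.sig)
    (h₁ : IsIntermediateSep Φ Ψ (θ₁'.disj (PropForm.var p)) χ₁)
    (h₂ : IsIntermediateSep Φ Ψ (θ₂'.disj (PropForm.var p).neg) χ₂) :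
    IsIntermediateSep Φ Ψ (θ₁'.disj θ₂') (χ₁.disj χ₂) := by
  obtain ⟨hs₁, hΦ₁, hΨ₁⟩ := h₁
  obtain ⟨hs₂, hΦ₂, hΨ₂⟩ := h₂
  have hpχ₁ : p ∉ χ₁.sig := fun h => hpΨ (Finset.mem_inter.1 (hs₁ h)).2
  have hpχ₂ : p ∉ χ₂.sig := fun h => hpΨ (Finset.mem_inter.1 (hs₂ h)).2
  exact ⟨Finset.union_subset hs₁ hs₂, hΦ₁.resolve hΦ₂,
    (hΨ₁.forget_var hpΨ hp₁ hpχ₁).disj_disj_neg_disj (hΨ₂.forget_neg_var hpΨ hp₂ hpχ₂)⟩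

/-- Resolution upon an atom `p ∈ sig(Φ) \ sig(Ψ)`: the disjunction of intermediate
separators for the parent clauses is an intermediate separator for the resolvent. -/
theorem intermediate_sep_resolution_left (Φ Ψ θ₁' θ₂' χ₁ χ₂ : PropForm) (p : ℕ)
    (hp₁ : p ∉ θ₁'.sig) (hp₂ : p ∉ θ₂'.sig)
    (hpΦ : p ∈ Φ.sig) (hpΨ : p ∉ Ψ.sig)
    (h₁ : IsIntermediateSep Φ Ψ (θ₁'.disj (PropForm.var p)) χ₁)
    (h₂ : IsIntermediateSep Φ Ψ (θ₂'.disj (PropForm.var p).neg) χ₂) :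
    IsIntermediateSep Φ Ψ (θ₁'.disj θ₂') (χ₁.disj χ₂) :=
  intermediate_sep_resolution_left_general Φ Ψ θ₁' θ₂' χ₁ χ₂ p hp₁ hp₂ hpΨ h₁ h₂
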